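/- arXiv:0901.1971 — 3 statements merged into one kernel-verified Lean document; each statement's English description precedes it below -/
import Mathlib

section
/- For any two distinct messages p, q ∈ {0,1}^k, the codewords satisfy ℓ∞(E_{n,k}^λ(p), E_{n,k}^λ(q)) ≥ ⌊(n − k)/λ⌋; that is, C_{n,k}^λ is a (λ, n, ⌊(n−k)/λ⌋)-frequency permutation array. -/
open Finset

/-- Ceiling division: `cdiv a b = ⌈a/b⌉` for natural numbers (with `b > 0`). -/
def cdiv (a b : ℕ) : ℕ := (a + b - 1) / b

/-- `ones msg i` : number of indices `j < i` (0-indexed) with `msg j = 1`. -/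
def ones {k : ℕ} (msg : Fin k → Bool) (i : ℕ) : ℕ :=
  (univ.filter fun j : Fin k => j.val < i ∧ msg j = true).card

/-- `zeros msg i` : number of indices `j < i` (0-indexed) with `msg j = 0`. -/
def zeros {k : ℕ} (msg : Fin k → Bool) (i : ℕ) : ℕ :=
  (univ.filter fun j : Fin k => j.val < i ∧ msg j = false).card

/-- The encoding map `E_{n,k}^λ`.  The `i`-th entry (0-indexed `i`, so 1-indexed
position `i+1`) of the codeword of `msg` is `⌈(n − o_i)/λ⌉` if `msg i = 1`,
`⌈(1 + z_i)/λ⌉` if `msg i = 0` (where `o_i`, `z_i` count ones resp. zeros among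
the earlier message bits), and `⌈((i+1) − o)/λ⌉` for positions past `k`, where
`o` is the total number of ones in `msg`. -/
def enc (n k lam : ℕ) (msg : Fin k → Bool) : Fin n → ℕ :=
  fun i =>
    if h : i.val < k then
      if msg ⟨i.val, h⟩ = true then cdiv (n - ones msg i.val) lam
      else cdiv (1 + zeros msg i.val) lam
    else cdiv (i.val + 1 - ones msg k) lam

/-- `ℓ∞` distance between two sequences of naturals. -/
def linfN {n : ℕ} (x y : Fin n → ℕ) : ℕ :=
  univ.sup fun i => ((x i : ℤ) - (y i : ℤ)).natAbs

/-- Membership in `S_n^λ` : all entries lie in `{1,…,m}` and each symbol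
`v ∈ {1,…,m}` occurs exactly `λ` times. -/
def memSnl (n m lam : ℕ) (x : Fin n → ℕ) : Prop :=
  (∀ i, x i ∈ Finset.Icc 1 m) ∧
  ∀ v ∈ Finset.Icc 1 m, (univ.filter fun i => x i = v).card = lam

/-
Since `⌈a/λ⌉ - ⌈b/λ⌉ ≥ ⌊(a - b)/λ⌋`, one position where the arguments of the two ceilings differ
by at least `n - k` suffices. At the first position `i` where the messages differ, say `p i = 1`
and `q i = 0`, both messages have the same prefix counts `o + z = i`, so the entries are
`⌈(n - o)/λ⌉` and `⌈(1 + z)/λ⌉`, whose arguments differ by `n - (i + 1) ≥ n - k`.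
-/

lemma cdiv_mono (l : ℕ) {a b : ℕ} (h : a ≤ b) : cdiv a l ≤ cdiv b l :=
  Nat.div_le_div_right (by omega)

lemma cdiv_add_mul {l : ℕ} (hl : 0 < l) (b t : ℕ) : cdiv (b + l * t) l = cdiv b l + t := by
  unfold cdiv
  rw [show b + l * t + l - 1 = (b + l - 1) + l * t by omega, Nat.add_mul_div_left _ _ hl]

lemma sub_div_le_cdiv_sub_cdiv (a b l : ℕ) : (a - b) / l ≤ cdiv a l - cdiv b l := by
  rcases Nat.eq_zero_or_pos l with rfl | hl
  · simp
  rcases lt_or_ge a b with hab | hba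
  · simp [Nat.sub_eq_zero_of_le hab.le]
  have hfit : b + l * ((a - b) / l) ≤ a := by
    have := Nat.mul_div_le (a - b) l
    omega
  have := cdiv_mono l hfit
  rw [cdiv_add_mul hl] at this
  omega

lemma ones_add_zeros {k : ℕ} (msg : Fin k → Bool) {i : ℕ} (hi : i ≤ k) :
    ones msg i + zeros msg i = i := by
  have := card_filter_add_card_filter_not (s := univ.filter fun j : Fin k => j.val < i)
    (fun j => msg j = true)
  simp only [filter_filter, Bool.not_eq_true, Fin.card_filter_val_lt] at this
  rwa [min_eq_right hi] at this

section prefix_counts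

variable {k : ℕ} {p q : Fin k → Bool} {i : ℕ}

lemma ones_congr (h : ∀ j : Fin k, j.val < i → p j = q j) : ones p i = ones q i := by
  unfold ones
  congr 1
  exact filter_congr fun j _ => and_congr_right fun hj => by rw [h j hj]

lemma zeros_congr (h : ∀ j : Fin k, j.val < i → p j = q j) : zeros p i = zeros q i := by
  unfold zeros
  congr 1
  exact filter_congr fun j _ => and_congr_right fun hj => by rw [h j hj]

end prefix_counts

lemma exists_first_ne {k : ℕ} {p q : Fin k → Bool} (hpq : p ≠ q) :
    ∃ i, p i ≠ q i ∧ ∀ j < i, p j = q j := by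
  obtain ⟨i, hi, hmin⟩ := exists_minimal_of_wellFoundedLT (fun i => p i ≠ q i)
    (Function.ne_iff.mp hpq)
  exact ⟨i, hi, fun j hj => by_contra fun hne => (hmin hne hj.le).not_gt hj⟩

lemma linfN_comm {n : ℕ} (x y : Fin n → ℕ) : linfN x y = linfN y x := by
  unfold linfN
  congr 1
  funext i
  omega

lemma sub_le_linfN {n : ℕ} (x y : Fin n → ℕ) (i : Fin n) : x i - y i ≤ linfN x y :=
  le_trans (by omega) (le_sup (f := fun j => ((x j : ℤ) - y j).natAbs) (mem_univ i))

section enc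

variable {n k lam : ℕ} {msg : Fin k → Bool}

lemma enc_castLE_of_true (hkn : k ≤ n) {i : Fin k} (h : msg i = true) :
    enc n k lam msg (i.castLE hkn) = cdiv (n - ones msg i) lam := by
  simp [enc, h]

lemma enc_castLE_of_false (hkn : k ≤ n) {i : Fin k} (h : msg i = false) :
    enc n k lam msg (i.castLE hkn) = cdiv (1 + zeros msg i) lam := by
  simp [enc, h]

lemma div_le_linfN_enc_of_first_ne (hkn : k ≤ n) {p q : Fin k → Bool} {i : Fin k}
    (hp : p i = true) (hq : q i = false) (hbefore : ∀ j < i, p j = q j) :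
    (n - k) / lam ≤ linfN (enc n k lam p) (enc n k lam q) := by
  have hcount := ones_add_zeros p i.is_lt.le
  rw [zeros_congr fun j hj => hbefore j hj] at hcount
  calc (n - k) / lam
      ≤ (n - ones p i - (1 + zeros q i)) / lam := Nat.div_le_div_right (by omega)
    _ ≤ cdiv (n - ones p i) lam - cdiv (1 + zeros q i) lam := sub_div_le_cdiv_sub_cdiv _ _ _
    _ = enc n k lam p (i.castLE hkn) - enc n k lam q (i.castLE hkn) := by
      rw [enc_castLE_of_true hkn hp, enc_castLE_of_false hkn hq]
    _ ≤ linfN (enc n k lam p) (enc n k lam q) := sub_le_linfN _ _ _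

end enc

theorem enc_min_distance_general (lam k : ℕ)
    (n : ℕ) (hkn : k + lam ≤ n)
    (p q : Fin k → Bool) (hpq : p ≠ q) :
    (n - k) / lam ≤ linfN (enc n k lam p) (enc n k lam q) := by
  obtain ⟨i, hi, hbefore⟩ := exists_first_ne hpq
  have hkn' : k ≤ n := by omega
  cases hpi : p i <;> cases hqi : q i <;> simp only [hpi, hqi, ne_eq, not_true_eq_false] at hi
  · rw [linfN_comm]
    exact div_le_linfN_enc_of_first_ne hkn' hqi hpi fun j hj => (hbefore j hj).symm
  · exact div_le_linfN_enc_of_first_ne hkn' hpi hqi hbefore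

/-- Any two distinct codewords of `E_{n,k}^λ` are at `ℓ∞`-distance at least
`⌊(n−k)/λ⌋`, i.e. `C_{n,k}^λ` is a `(λ,n,⌊(n−k)/λ⌋)`-FPA. -/
theorem enc_min_distance (lam m k : ℕ) (hl : 0 < lam) (hm : 0 < m) (hk : 0 < k)
    (n : ℕ) (hn : n = m * lam) (hkn : k + lam ≤ n)
    (p q : Fin k → Bool) (hpq : p ≠ q) :
    (n - k) / lam ≤ linfN (enc n k lam p) (enc n k lam q) :=
  enc_min_distance_general lam k n hkn p q hpq
end

section
/- Let d = ⌊(n − k)/λ⌋ ≥ 1 and let δ ≥ 0 be an integer. Suppose x is a sequence with ℓ∞(x, E_{n,k}^λ(m)) ≤ δ for some message m ∈ {0,1}^k, and let i ∈ {1,…,k}. If m_i = 0 then #{j : i < j ≤ n, x_i ≥ x_j} ≤ ((2δ + 1)/d)·(n − i), and if m_i = 1 then #{j : i < j ≤ n, x_i ≤ x_j} ≤ ((2δ + 1)/d)·(n − i); equivalently, a single uniformly random comparison index j ∈ {i+1,…,n} yields the correct message bit m_i with probability at least 1 − (2δ + 1)/d. -/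
open Finset

/-! ### Auxiliary lemmas -/

lemma cdiv_le_iff {a b V : ℕ} (hb : 0 < b) : cdiv a b ≤ V ↔ a ≤ b * V := by
  unfold cdiv
  rw [Nat.div_le_iff_le_mul_add_pred hb]
  obtain ⟨w, hw⟩ : ∃ w, b * V = w := ⟨_, rfl⟩
  rw [hw]; omega

lemma le_cdiv_mul {a b : ℕ} (hb : 0 < b) : a ≤ b * cdiv a b := (cdiv_le_iff hb).mp le_rfl

lemma cdiv_mul_le (a : ℕ) {b : ℕ} (hb : 0 < b) : b * cdiv a b ≤ a + b - 1 := by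
  unfold cdiv
  have := Nat.div_mul_le_self (a + b - 1) b
  rw [mul_comm]
  exact this

lemma ones_le_k {k : ℕ} (msg : Fin k → Bool) (b : ℕ) : ones msg b ≤ k := by
  unfold ones
  exact le_trans (Finset.card_filter_le _ _) (by simp)

lemma zeros_le_k {k : ℕ} (msg : Fin k → Bool) (b : ℕ) : zeros msg b ≤ k := by
  unfold zeros
  exact le_trans (Finset.card_filter_le _ _) (by simp)

lemma zeros_add_ones_lt_of_false {k : ℕ} (msg : Fin k → Bool) (a b c : ℕ) (hc : c < k)
    (hca : ¬ c < a) (hmsg : msg ⟨c, hc⟩ = false) :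
    zeros msg a + ones msg b < k := by
  classical
  have hdisj : Disjoint (univ.filter fun j : Fin k => j.val < a ∧ msg j = false)
      (univ.filter fun j : Fin k => j.val < b ∧ msg j = true) := by
    simp only [Finset.disjoint_left, mem_filter]
    rintro x ⟨-, -, h1⟩ ⟨-, -, h2⟩
    simp [h1] at h2
  have hi1 : (⟨c, hc⟩ : Fin k) ∉ (univ.filter fun j : Fin k => j.val < a ∧ msg j = false)
      ∪ (univ.filter fun j : Fin k => j.val < b ∧ msg j = true) := by
    simp [hca, hmsg]
  have hcard := Finset.card_le_univ (insert (⟨c, hc⟩ : Fin k)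
      ((univ.filter fun j : Fin k => j.val < a ∧ msg j = false)
      ∪ (univ.filter fun j : Fin k => j.val < b ∧ msg j = true)))
  rw [Finset.card_insert_of_notMem hi1, Finset.card_union_of_disjoint hdisj] at hcard
  simp only [Finset.card_univ, Fintype.card_fin] at hcard
  unfold zeros ones
  omega

lemma zeros_add_ones_lt_of_true {k : ℕ} (msg : Fin k → Bool) (a b c : ℕ) (hc : c < k)
    (hcb : ¬ c < b) (hmsg : msg ⟨c, hc⟩ = true) :
    zeros msg a + ones msg b < k := by
  classical
  have hdisj : Disjoint (univ.filter fun j : Fin k => j.val < a ∧ msg j = false)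
      (univ.filter fun j : Fin k => j.val < b ∧ msg j = true) := by
    simp only [Finset.disjoint_left, mem_filter]
    rintro x ⟨-, -, h1⟩ ⟨-, -, h2⟩
    simp [h1] at h2
  have hi1 : (⟨c, hc⟩ : Fin k) ∉ (univ.filter fun j : Fin k => j.val < a ∧ msg j = false)
      ∪ (univ.filter fun j : Fin k => j.val < b ∧ msg j = true) := by
    simp [hcb, hmsg]
  have hcard := Finset.card_le_univ (insert (⟨c, hc⟩ : Fin k)
      ((univ.filter fun j : Fin k => j.val < a ∧ msg j = false)
      ∪ (univ.filter fun j : Fin k => j.val < b ∧ msg j = true)))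
  rw [Finset.card_insert_of_notMem hi1, Finset.card_union_of_disjoint hdisj] at hcard
  simp only [Finset.card_univ, Fintype.card_fin] at hcard
  unfold zeros ones
  omega

lemma zeros_lt_zeros {k : ℕ} (msg : Fin k → Bool) (a : ℕ) (ha : a < k)
    (hmsg : msg ⟨a, ha⟩ = false) {b : ℕ} (hb : a < b) :
    zeros msg a < zeros msg b := by
  unfold zeros
  apply Finset.card_lt_card
  rw [Finset.ssubset_iff_of_subset]
  · exact ⟨⟨a, ha⟩, by simp [hb, hmsg], by simp⟩
  · intro x hx
    simp only [mem_filter, mem_univ, true_and] at hx ⊢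
    exact ⟨by omega, hx.2⟩

lemma ones_lt_ones {k : ℕ} (msg : Fin k → Bool) (a : ℕ) (ha : a < k)
    (hmsg : msg ⟨a, ha⟩ = true) {b : ℕ} (hb : a < b) :
    ones msg a < ones msg b := by
  unfold ones
  apply Finset.card_lt_card
  rw [Finset.ssubset_iff_of_subset]
  · exact ⟨⟨a, ha⟩, by simp [hb, hmsg], by simp⟩
  · intro x hx
    simp only [mem_filter, mem_univ, true_and] at hx ⊢
    exact ⟨by omega, hx.2⟩

lemma card_le_of_maps_Icc {n : ℕ} (f : Fin n → ℕ) (hf : Function.Injective f)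
    (P : Fin n → Prop) [DecidablePred P] (a b : ℕ)
    (h : ∀ j, P j → a ≤ f j ∧ f j ≤ b) :
    (univ.filter P).card ≤ b + 1 - a := by
  have hmap : ∀ j ∈ univ.filter P, f j ∈ Finset.Icc a b := by
    intro j hj
    exact Finset.mem_Icc.mpr (h j (Finset.mem_filter.mp hj).2)
  have := Finset.card_le_card_of_injOn f hmap hf.injOn
  simpa [Nat.card_Icc] using this

/-- The underlying "permutation" map: `enc = cdiv ∘ sig`. -/
def sig (n k : ℕ) {k' : ℕ} (msg : Fin k' → Bool) : Fin n → ℕ :=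
  fun i =>
    if h : i.val < k' then
      if msg ⟨i.val, h⟩ = true then n - ones msg i.val
      else 1 + zeros msg i.val
    else i.val + 1 - ones msg k

lemma enc_eq_sig (n k lam : ℕ) (msg : Fin k → Bool) (j : Fin n) :
    enc n k lam msg j = cdiv (sig n k msg j) lam := by
  unfold enc sig
  split
  · split <;> rfl
  · rfl

lemma sig_inj {n k lam : ℕ} (hl : 0 < lam) (hkn : k + lam ≤ n) (msg : Fin k → Bool) :
    Function.Injective (sig n k msg) := by
  intro j1 j2 heq
  have hj1 := j1.isLt
  have hj2 := j2.isLt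
  have hok := ones_le_k msg k
  unfold sig at heq
  apply Fin.ext
  by_cases h1 : j1.val < k <;> by_cases h2 : j2.val < k
  · rw [dif_pos h1, dif_pos h2] at heq
    rcases hm1 : msg ⟨j1.val, h1⟩ <;> rcases hm2 : msg ⟨j2.val, h2⟩ <;>
      rw [hm1, hm2] at heq <;>
      simp only [Bool.false_eq_true, if_false, if_true] at heq
    · by_contra hne
      rcases Nat.lt_or_ge j1.val j2.val with h | h
      · have := zeros_lt_zeros msg j1.val h1 hm1 (b := j2.val) h
        omega
      · have := zeros_lt_zeros msg j2.val h2 hm2 (b := j1.val) (by omega)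
        omega
    · have hlt := zeros_add_ones_lt_of_false msg j1.val j2.val j1.val h1 (by omega) hm1
      have := ones_le_k msg j2.val
      omega
    · have hlt := zeros_add_ones_lt_of_false msg j2.val j1.val j2.val h2 (by omega) hm2
      have := ones_le_k msg j1.val
      omega
    · by_contra hne
      have hb1 := ones_le_k msg j1.val
      have hb2 := ones_le_k msg j2.val
      rcases Nat.lt_or_ge j1.val j2.val with h | h
      · have := ones_lt_ones msg j1.val h1 hm1 (b := j2.val) h
        omega
      · have := ones_lt_ones msg j2.val h2 hm2 (b := j1.val) (by omega)
        omega
  · rw [dif_pos h1, dif_neg h2] at heq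
    rcases hm1 : msg ⟨j1.val, h1⟩ <;> rw [hm1] at heq <;>
      simp only [Bool.false_eq_true, if_false, if_true] at heq
    · have hlt := zeros_add_ones_lt_of_false msg j1.val k j1.val h1 (by omega) hm1
      omega
    · have hlt := ones_lt_ones msg j1.val h1 hm1 (b := k) h1
      have hb1 := ones_le_k msg j1.val
      omega
  · rw [dif_neg h1, dif_pos h2] at heq
    rcases hm2 : msg ⟨j2.val, h2⟩ <;> rw [hm2] at heq <;>
      simp only [Bool.false_eq_true, if_false, if_true] at heq
    · have hlt := zeros_add_ones_lt_of_false msg j2.val k j2.val h2 (by omega) hm2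
      omega
    · have hlt := ones_lt_ones msg j2.val h2 hm2 (b := k) h2
      have hb2 := ones_le_k msg j2.val
      omega
  · rw [dif_neg h1, dif_neg h2] at heq
    omega

lemma sig_big_of_false {n k lam : ℕ} (hl : 0 < lam) (hkn : k + lam ≤ n)
    (msg : Fin k → Bool) (a : ℕ) (ha : a < k) (hmsg : msg ⟨a, ha⟩ = false)
    (j : Fin n) (hij : a < j.val) :
    zeros msg a + 2 ≤ sig n k msg j := by
  have hj := j.isLt
  unfold sig
  split
  · rename_i h
    split
    · have hlt := zeros_add_ones_lt_of_false msg a j.val a ha (by omega) hmsg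
      have := ones_le_k msg j.val
      omega
    · have := zeros_lt_zeros msg a ha hmsg (b := j.val) hij
      omega
  · rename_i h
    have hlt := zeros_add_ones_lt_of_false msg a k a ha (by omega) hmsg
    have := ones_le_k msg k
    omega

lemma sig_small_of_true {n k lam : ℕ} (hl : 0 < lam) (hkn : k + lam ≤ n)
    (msg : Fin k → Bool) (a : ℕ) (ha : a < k) (hmsg : msg ⟨a, ha⟩ = true)
    (j : Fin n) (hij : a < j.val) :
    sig n k msg j + ones msg a + 1 ≤ n := by
  have hj := j.isLt
  unfold sig
  split
  · rename_i h
    split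
    · have hlt := ones_lt_ones msg a ha hmsg (b := j.val) hij
      have := ones_le_k msg j.val
      omega
    · have hlt := zeros_add_ones_lt_of_true msg j.val a a ha (by omega) hmsg
      omega
  · rename_i h
    have hlt := ones_lt_ones msg a ha hmsg (b := k) ha
    have := ones_le_k msg k
    omega

lemma real_final (c dd lam δ n iv : ℕ) (hd : 1 ≤ dd) (hc : c ≤ (2 * δ + 1) * lam)
    (hdl : dd * lam + (iv + 1) ≤ n) :
    (c : ℝ) ≤ (2 * (δ : ℝ) + 1) / (dd : ℝ) * ((n : ℝ) - ((iv : ℝ) + 1)) := by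
  have hd0 : (0 : ℝ) < dd := by exact_mod_cast hd
  have h1 : (c : ℝ) ≤ (2 * (δ : ℝ) + 1) * lam := by exact_mod_cast hc
  have h2 : (dd : ℝ) * lam ≤ (n : ℝ) - ((iv : ℝ) + 1) := by
    have : ((dd * lam + (iv + 1) : ℕ) : ℝ) ≤ (n : ℕ) := by exact_mod_cast hdl
    push_cast at this
    linarith
  calc (c : ℝ) ≤ (2 * (δ : ℝ) + 1) * lam := h1
    _ = (2 * (δ : ℝ) + 1) / dd * ((dd : ℝ) * lam) := by field_simp
    _ ≤ _ := by
        apply mul_le_mul_of_nonneg_left h2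
        positivity

lemma real_trivial (c dd δ n iv : ℕ) (hd : 1 ≤ dd) (hdd : dd ≤ 2 * δ)
    (hc : c + (iv + 1) ≤ n) :
    (c : ℝ) ≤ (2 * (δ : ℝ) + 1) / (dd : ℝ) * ((n : ℝ) - ((iv : ℝ) + 1)) := by
  have hd0 : (0 : ℝ) < dd := by exact_mod_cast hd
  have h1 : (c : ℝ) ≤ (n : ℝ) - ((iv : ℝ) + 1) := by
    have : ((c + (iv + 1) : ℕ) : ℝ) ≤ (n : ℕ) := by exact_mod_cast hc
    push_cast at this
    linarith
  have h2 : (1 : ℝ) ≤ (2 * (δ : ℝ) + 1) / dd := by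
    rw [le_div_iff₀ hd0]
    have : (dd : ℝ) ≤ 2 * (δ : ℝ) := by exact_mod_cast hdd
    linarith
  have h3 : (0 : ℝ) ≤ (n : ℝ) - ((iv : ℝ) + 1) := le_trans (by positivity) h1
  nlinarith

/-- If `x` is within `ℓ∞`-distance `δ` of the codeword `E_{n,k}^λ(msg)` and
`d = ⌊(n−k)/λ⌋ ≥ 1`, then for any message position `i` the number of later
positions `j` whose comparison with `x_i` gives the wrong answer for `m_i` is
at most `((2δ+1)/d)·(n − i)` (1-indexed `i`, so `n − i = n − (i.val + 1)`);
hence one uniformly random comparison yields `m_i` with probability at least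
`1 − (2δ+1)/d`. -/
theorem local_decoder_error_bound (lam m k : ℕ) (hl : 0 < lam) (hm : 0 < m)
    (hk : 0 < k) (n : ℕ) (hn : n = m * lam) (hkn : k + lam ≤ n)
    (hd : 1 ≤ (n - k) / lam) (δ : ℕ) (msg : Fin k → Bool) (x : Fin n → ℕ)
    (hclose : linfN x (enc n k lam msg) ≤ δ) (i : Fin k) :
    (msg i = false →
      (((univ.filter fun j : Fin n =>
            i.val < j.val ∧ x j ≤ x ⟨i.val, by have := i.isLt; omega⟩).card : ℝ)
        ≤ (2 * (δ : ℝ) + 1) / (((n - k) / lam : ℕ) : ℝ) * ((n : ℝ) - (i.val + 1)))) ∧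
    (msg i = true →
      (((univ.filter fun j : Fin n =>
            i.val < j.val ∧ x ⟨i.val, by have := i.isLt; omega⟩ ≤ x j).card : ℝ)
        ≤ (2 * (δ : ℝ) + 1) / (((n - k) / lam : ℕ) : ℝ) * ((n : ℝ) - (i.val + 1)))) := by
  classical
  have hik : i.val < k := i.isLt
  have hin : i.val < n := by omega
  unfold linfN at hclose
  have hdist : ∀ j : Fin n, (enc n k lam msg j : ℤ) ≤ x j + δ ∧
      (x j : ℤ) ≤ enc n k lam msg j + δ := by
    intro j
    have h0 : ((x j : ℤ) - enc n k lam msg j).natAbs ≤ δ :=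
      le_trans (Finset.le_sup (f := fun i : Fin n =>
        ((x i : ℤ) - (enc n k lam msg i : ℤ)).natAbs) (mem_univ j)) hclose
    have h2 : |(x j : ℤ) - enc n k lam msg j| ≤ (δ : ℤ) := by
      rw [Int.abs_eq_natAbs]; exact_mod_cast h0
    have h3 := abs_le.mp h2
    constructor <;> linarith [h3.1, h3.2]
  have hdl : ((n - k) / lam) * lam + (i.val + 1) ≤ n := by
    have := Nat.div_mul_le_self (n - k) lam
    omega
  constructor
  · -- msg i = false
    intro hmsg
    have hmsg' : msg ⟨i.val, hik⟩ = false := by rw [Fin.eta]; exact hmsg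
    have hei : enc n k lam msg ⟨i.val, hin⟩ = cdiv (1 + zeros msg i.val) lam := by
      show (if h : i.val < k then
          if msg ⟨i.val, h⟩ = true then cdiv (n - ones msg i.val) lam
          else cdiv (1 + zeros msg i.val) lam
        else cdiv (i.val + 1 - ones msg k) lam) = _
      rw [dif_pos hik, if_neg (by simp [hmsg'])]
    have hbound : ∀ j : Fin n, (i.val < j.val ∧ x j ≤ x ⟨i.val, hin⟩) →
        zeros msg i.val + 2 ≤ sig n k msg j ∧
        sig n k msg j ≤ lam * (enc n k lam msg ⟨i.val, hin⟩ + 2 * δ) := by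
      rintro j ⟨hij, hxj⟩
      refine ⟨sig_big_of_false hl hkn msg i.val hik hmsg' j hij, ?_⟩
      have h1 := hdist j
      have h2 := hdist ⟨i.val, hin⟩
      have h3 : enc n k lam msg j ≤ enc n k lam msg ⟨i.val, hin⟩ + 2 * δ := by omega
      rw [enc_eq_sig n k lam msg j] at h3
      exact (cdiv_le_iff hl).mp h3
    have hcard := card_le_of_maps_Icc (sig n k msg) (sig_inj hl hkn msg) _ _ _ hbound
    have hEle : lam * enc n k lam msg ⟨i.val, hin⟩ ≤ zeros msg i.val + lam := by
      rw [hei]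
      have := cdiv_mul_le (1 + zeros msg i.val) hl
      omega
    have hnat : (univ.filter fun j : Fin n =>
        i.val < j.val ∧ x j ≤ x ⟨i.val, hin⟩).card ≤ (2 * δ + 1) * lam := by
      obtain ⟨A, hA⟩ : ∃ A, lam * enc n k lam msg ⟨i.val, hin⟩ = A := ⟨_, rfl⟩
      obtain ⟨B, hB⟩ : ∃ B, lam * δ = B := ⟨_, rfl⟩
      have hT : lam * (enc n k lam msg ⟨i.val, hin⟩ + 2 * δ) = A + 2 * B := by
        rw [← hA, ← hB]; ring
      have hG : (2 * δ + 1) * lam = 2 * B + lam := by rw [← hB]; ring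
      rw [hT] at hcard
      rw [hA] at hEle
      rw [hG]
      omega
    exact real_final _ ((n - k) / lam) lam δ n i.val hd hnat hdl
  · -- msg i = true
    intro hmsg
    have hmsg' : msg ⟨i.val, hik⟩ = true := by rw [Fin.eta]; exact hmsg
    have hoik : ones msg i.val < k := by
      have := zeros_add_ones_lt_of_true msg 0 i.val i.val hik (by omega) hmsg'
      omega
    have hei : enc n k lam msg ⟨i.val, hin⟩ = cdiv (n - ones msg i.val) lam := by
      show (if h : i.val < k then
          if msg ⟨i.val, h⟩ = true then cdiv (n - ones msg i.val) lam
          else cdiv (1 + zeros msg i.val) lam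
        else cdiv (i.val + 1 - ones msg k) lam) = _
      rw [dif_pos hik, if_pos hmsg']
    have hdlE : (n - k) / lam ≤ enc n k lam msg ⟨i.val, hin⟩ := by
      by_contra hcon
      push_neg at hcon
      have h1 : cdiv (n - ones msg i.val) lam ≤ (n - k) / lam - 1 := by
        rw [← hei]; omega
      have h2 := (cdiv_le_iff hl).mp h1
      have h3 : lam * ((n - k) / lam) ≤ n - k := by
        rw [mul_comm]; exact Nat.div_mul_le_self _ _
      have h4 : lam * ((n - k) / lam - 1) + lam = lam * ((n - k) / lam) := by
        rw [← Nat.mul_succ]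
        congr 1
        omega
      obtain ⟨P, hP⟩ : ∃ P, lam * ((n - k) / lam - 1) = P := ⟨_, rfl⟩
      obtain ⟨Q, hQ⟩ : ∃ Q, lam * ((n - k) / lam) = Q := ⟨_, rfl⟩
      rw [hP] at h2 h4
      rw [hQ] at h3 h4
      omega
    by_cases hcase : enc n k lam msg ⟨i.val, hin⟩ ≤ 2 * δ
    · -- trivial case: d ≤ 2δ
      have hbound : ∀ j : Fin n, (i.val < j.val ∧ x ⟨i.val, hin⟩ ≤ x j) →
          i.val + 1 ≤ j.val ∧ j.val ≤ n - 1 := by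
        rintro j ⟨hij, -⟩
        have := j.isLt
        omega
      have hcard := card_le_of_maps_Icc (fun j : Fin n => j.val)
        (Fin.val_injective) _ _ _ hbound
      refine real_trivial _ ((n - k) / lam) δ n i.val hd (le_trans hdlE hcase) ?_
      omega
    · push_neg at hcase
      have hbound : ∀ j : Fin n, (i.val < j.val ∧ x ⟨i.val, hin⟩ ≤ x j) →
          lam * (enc n k lam msg ⟨i.val, hin⟩ - 2 * δ - 1) + 1 ≤ sig n k msg j ∧
          sig n k msg j ≤ n - ones msg i.val - 1 := by
        rintro j ⟨hij, hxj⟩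
        constructor
        · have h1 := hdist j
          have h2 := hdist ⟨i.val, hin⟩
          have h3 : enc n k lam msg ⟨i.val, hin⟩ - 2 * δ ≤ enc n k lam msg j := by omega
          by_contra hcon
          push_neg at hcon
          have h5 : cdiv (sig n k msg j) lam ≤ enc n k lam msg ⟨i.val, hin⟩ - 2 * δ - 1 :=
            (cdiv_le_iff hl).mpr (by omega)
          rw [← enc_eq_sig n k lam msg j] at h5
          omega
        · have := sig_small_of_true hl hkn msg i.val hik hmsg' j hij
          omega
      have hcard := card_le_of_maps_Icc (sig n k msg) (sig_inj hl hkn msg) _ _ _ hbound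
      have hlow : n - ones msg i.val ≤ lam * enc n k lam msg ⟨i.val, hin⟩ := by
        rw [hei]; exact le_cdiv_mul hl
      have hnat : (univ.filter fun j : Fin n =>
          i.val < j.val ∧ x ⟨i.val, hin⟩ ≤ x j).card ≤ (2 * δ + 1) * lam := by
        obtain ⟨W, hW⟩ : ∃ W, enc n k lam msg ⟨i.val, hin⟩ = W + 1 + 2 * δ :=
          ⟨enc n k lam msg ⟨i.val, hin⟩ - 1 - 2 * δ, by omega⟩
        obtain ⟨P, hP⟩ : ∃ P, lam * W = P := ⟨_, rfl⟩
        obtain ⟨B, hB⟩ : ∃ B, lam * δ = B := ⟨_, rfl⟩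
        have h5 : lam * enc n k lam msg ⟨i.val, hin⟩ = P + lam + 2 * B := by
          rw [hW, ← hP, ← hB]; ring
        have h6 : lam * (enc n k lam msg ⟨i.val, hin⟩ - 2 * δ - 1) = P := by
          rw [hW, show W + 1 + 2 * δ - 2 * δ - 1 = W from by omega, hP]
        have hG : (2 * δ + 1) * lam = 2 * B + lam := by rw [← hB]; ring
        rw [h6] at hcard
        rw [h5] at hlow
        rw [hG]
        have hok := ones_le_k msg i.val
        omega
      exact real_final _ ((n - k) / lam) lam δ n i.val hd hnat hdl
end

section
/- Let x = E_{n,k}^λ(m) be a codeword for some message m ∈ {0,1}^k, let i ∈ {1,…,k}, and let j be any index with i < j ≤ n and x_j ≠ x_i. Then x_i > x_j if and only if m_i = 1 (and x_i < x_j if and only if m_i = 0); consequently the local decoder, run on an uncorrupted codeword, always outputs the correct bit m_i. -/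
open Finset

/-
The codeword is `⌈p/λ⌉` entrywise, where `p = E_{n,k}^1(m)` is the codeword for `λ = 1`, and
ceiling division is monotone, so it suffices to compare entries of `p`. If `m_i = 1`, then
`p_i = n − o_i` dominates every later entry: a later one-bit gets `n − o_j` with `o_j > o_i`, and
a later zero-bit or tail entry is at most its index minus the ones before it, which the count
`o_j > o_i` keeps below `n − o_i`. Symmetrically, if `m_i = 0` then `p_i = 1 + z_i` is dominated
by every later entry. Since `x_j ≠ x_i`, the comparison is strict and determines `m_i`.
-/

lemma cdiv_one (a : ℕ) : cdiv a 1 = a := by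
  simp [cdiv]

lemma cdiv_le_cdiv {a b : ℕ} (c : ℕ) (h : a ≤ b) : cdiv a c ≤ cdiv b c :=
  Nat.div_le_div_right (by omega)

lemma enc_eq_cdiv_enc_one (n k lam : ℕ) (msg : Fin k → Bool) (i : Fin n) :
    enc n k lam msg i = cdiv (enc n k 1 msg i) lam := by
  unfold enc
  split_ifs <;> simp only [cdiv_one]

section Counting

variable {k : ℕ} (msg : Fin k → Bool)

lemma card_filter_bit_lt {b : Bool} {i : ℕ} (hi : i < k) (hb : msg ⟨i, hi⟩ = b) {t : ℕ}
    (hit : i < t) :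
    #{j : Fin k | j.val < i ∧ msg j = b} < #{j : Fin k | j.val < t ∧ msg j = b} := by
  refine card_lt_card ((ssubset_iff_of_subset ?_).2 ⟨⟨i, hi⟩, by simp [hit, hb], by simp⟩)
  intro a ha
  simp only [mem_filter, mem_univ, true_and] at ha ⊢
  exact ⟨ha.1.trans hit, ha.2⟩

lemma ones_lt_ones_s18 {i : ℕ} (hi : i < k) (hb : msg ⟨i, hi⟩ = true) {t : ℕ} (hit : i < t) :
    ones msg i < ones msg t :=
  card_filter_bit_lt msg hi hb hit

lemma zeros_lt_zeros_s18 {i : ℕ} (hi : i < k) (hb : msg ⟨i, hi⟩ = false) {t : ℕ} (hit : i < t) :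
    zeros msg i < zeros msg t :=
  card_filter_bit_lt msg hi hb hit

lemma ones_add_zeros_le (t : ℕ) : ones msg t + zeros msg t ≤ t := by
  calc ones msg t + zeros msg t
      = #{j : Fin k | j.val < t} := by
        rw [← card_filter_add_card_filter_not (s := {j : Fin k | j.val < t})
          (fun j => msg j = true)]
        simp only [ones, zeros, filter_filter, Bool.not_eq_true]
    _ = min k t := Fin.card_filter_val_lt
    _ ≤ t := min_le_right k t

end Counting

section Positions

variable {n k : ℕ} {msg : Fin k → Bool} {i j : Fin n}

lemma enc_one_le_of_true (hi : i.val < k) (hb : msg ⟨i, hi⟩ = true) (hij : (i : ℕ) < j) :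
    enc n k 1 msg j ≤ enc n k 1 msg i := by
  have hj := j.isLt
  simp only [enc, hi, ↓reduceDIte, hb, ↓reduceIte, cdiv_one]
  split_ifs with hjk hbj
  · have := ones_lt_ones_s18 msg hi hb hij
    omega
  · have := ones_lt_ones_s18 msg hi hb hij
    have := ones_add_zeros_le msg j
    omega
  · have := ones_lt_ones_s18 msg hi hb hi
    have := ones_add_zeros_le msg k
    omega

lemma enc_one_le_of_false (hi : i.val < k) (hb : msg ⟨i, hi⟩ = false) (hij : (i : ℕ) < j) :
    enc n k 1 msg i ≤ enc n k 1 msg j := by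
  have hj := j.isLt
  simp only [enc, hi, ↓reduceDIte, hb, Bool.false_eq_true, ↓reduceIte, cdiv_one]
  split_ifs with hjk hbj
  · have := zeros_lt_zeros_s18 msg hi hb hij
    have := ones_add_zeros_le msg j
    omega
  · have := zeros_lt_zeros_s18 msg hi hb hij
    omega
  · have := zeros_lt_zeros_s18 msg hi hb hi
    have := ones_add_zeros_le msg k
    omega

end Positions

/-- On an uncorrupted codeword `x = E_{n,k}^λ(msg)`, any later position `j`
with `x_j ≠ x_i` reveals the bit `m_i`: `x_i > x_j ↔ m_i = 1` and
`x_i < x_j ↔ m_i = 0`; hence the local decoder always outputs `m_i` correctly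
on codewords. -/
theorem local_decoder_correct_on_codewords (lam k : ℕ) (n : ℕ) (hkn : k + lam ≤ n)
    (msg : Fin k → Bool) (i : Fin k) (j : Fin n) (hij : i.val < j.val)
    (hne : enc n k lam msg j ≠ enc n k lam msg ⟨i.val, by have := i.isLt; omega⟩) :
    (enc n k lam msg ⟨i.val, by have := i.isLt; omega⟩ > enc n k lam msg j
        ↔ msg i = true) ∧
    (enc n k lam msg ⟨i.val, by have := i.isLt; omega⟩ < enc n k lam msg j
        ↔ msg i = false) := by
  have hik := i.isLt
  simp only [enc_eq_cdiv_enc_one n k lam msg] at hne ⊢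
  cases hb : msg i
  case true =>
    have := cdiv_le_cdiv lam (enc_one_le_of_true (i := ⟨i, by omega⟩) (j := j) hik hb hij)
    simp only [Bool.true_eq_false, iff_true, iff_false]
    omega
  case false =>
    have := cdiv_le_cdiv lam (enc_one_le_of_false (i := ⟨i, by omega⟩) (j := j) hik hb hij)
    simp only [Bool.false_eq_true, iff_true, iff_false]
    omega
end
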